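/- arXiv:0810.3177 — 3 statements merged into one kernel-verified Lean document; each statement's English description precedes it below -/
import Mathlib

section
/- Let Σ11 be symmetric positive definite, s12 a vector, p12 a vector with nonnegative entries. A vector β minimizes F(β) = (1/4) βᵀ Σ11 β - s12ᵀ β + Σ_j (p12)_j |β_j| if and only if for each coordinate j, β_j = 2 S((s12)_j - (1/2) Σ_{k≠j} (Σ11)_{jk} β_k ; (p12)_j) / (Σ11)_{jj}, where S(x; ρ) = sgn(x)(|x| - ρ)_+ is the soft-thresholding operator. -/
/-- Soft-thresholding operator `S(x; ρ) = sgn(x)(|x| - ρ)₊`. -/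
noncomputable def softThreshold (x ρ : ℝ) : ℝ := Real.sign x * max (|x| - ρ) 0

open Matrix

/-!
Write `d = β' - β`, `Dⱼ = ½ (Σ₁₁ β)ⱼ - sⱼ` and `ψⱼ(t) = Dⱼ (t - βⱼ) + pⱼ (|t| - |βⱼ|)`. Then
`F(β') - F(β) = ¼ dᵀ Σ₁₁ d + ∑ⱼ ψⱼ(β'ⱼ)`, so `β` is a minimizer as soon as every `ψⱼ` is
nonnegative. Conversely, moving only coordinate `j` gives `0 ≤ ¼ Σ₁₁ⱼⱼ (t - βⱼ)² + ψⱼ(t)`, and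
shrinking the step towards `βⱼ` (convexity of `|·|`) makes the quadratic term negligible, so
`ψⱼ ≥ 0`. Finally `ψⱼ ≥ 0` is the subgradient condition `|Dⱼ| ≤ pⱼ`, `Dⱼ βⱼ + pⱼ |βⱼ| = 0`,
which is the optimality condition of the scalar problem solved by soft-thresholding.
-/

theorem softThreshold_of_lt {c ρ : ℝ} (hρ : 0 ≤ ρ) (hc : ρ < c) : softThreshold c ρ = c - ρ := by
  have hc0 : 0 < c := hρ.trans_lt hc
  rw [softThreshold, Real.sign_of_pos hc0, abs_of_pos hc0, max_eq_left (by linarith), one_mul]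

theorem softThreshold_of_lt_neg {c ρ : ℝ} (hρ : 0 ≤ ρ) (hc : c < -ρ) :
    softThreshold c ρ = c + ρ := by
  have hc0 : c < 0 := by linarith
  rw [softThreshold, Real.sign_of_neg hc0, abs_of_neg hc0, max_eq_left (by linarith)]
  ring

theorem softThreshold_of_abs_le {c ρ : ℝ} (hc : |c| ≤ ρ) : softThreshold c ρ = 0 := by
  rw [softThreshold, max_eq_right (by linarith), mul_zero]

theorem softThreshold_eq_iff {u c ρ : ℝ} (hρ : 0 ≤ ρ) :
    u = softThreshold c ρ ↔ |u - c| ≤ ρ ∧ (u - c) * u + ρ * |u| = 0 := by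
  constructor
  · rintro rfl
    rcases lt_or_ge ρ c with hc | hc
    · rw [softThreshold_of_lt hρ hc, sub_sub_cancel_left, abs_neg, abs_of_nonneg hρ,
        abs_of_pos (sub_pos.2 hc)]
      exact ⟨le_rfl, by ring⟩
    rcases lt_or_ge c (-ρ) with hc' | hc'
    · rw [softThreshold_of_lt_neg hρ hc', add_sub_cancel_left, abs_of_nonneg hρ,
        abs_of_neg (by linarith : c + ρ < 0)]
      exact ⟨le_rfl, by ring⟩
    · rw [softThreshold_of_abs_le (abs_le.2 ⟨hc', hc⟩)]
      simpa using abs_le.2 ⟨hc', hc⟩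
  · rintro ⟨hdist, hopt⟩
    rcases lt_trichotomy u 0 with hu | rfl | hu
    · rw [abs_of_neg hu] at hopt
      have hu' : u = c + ρ := by nlinarith
      rw [softThreshold_of_lt_neg hρ (by linarith), hu']
    · rw [softThreshold_of_abs_le (by simpa using hdist)]
    · rw [abs_of_pos hu] at hopt
      have hu' : u = c - ρ := by nlinarith
      rw [softThreshold_of_lt hρ (by linarith), hu']

theorem eq_two_mul_softThreshold_div_iff {a b c ρ : ℝ} (ha : 0 < a) (hρ : 0 ≤ ρ) :
    b = 2 * softThreshold c ρ / a ↔
      |a / 2 * b - c| ≤ ρ ∧ (a / 2 * b - c) * b + ρ * |b| = 0 := by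
  have ha2 : 0 < a / 2 := half_pos ha
  have hscale : b = 2 * softThreshold c ρ / a ↔ a / 2 * b = softThreshold c ρ := by
    rw [eq_div_iff ha.ne']
    constructor <;> intro h <;> linarith
  rw [hscale, softThreshold_eq_iff hρ, abs_mul, abs_of_pos ha2]
  refine and_congr_right fun _ => ?_
  rw [show (a / 2 * b - c) * (a / 2 * b) + ρ * (a / 2 * |b|)
      = a / 2 * ((a / 2 * b - c) * b + ρ * |b|) by ring, mul_eq_zero, or_iff_right ha2.ne']

theorem forall_linear_abs_nonneg_iff {D ρ b : ℝ} (hρ : 0 ≤ ρ) :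
    (∀ t, 0 ≤ D * (t - b) + ρ * (|t| - |b|)) ↔ |D| ≤ ρ ∧ D * b + ρ * |b| = 0 := by
  constructor
  · intro h
    -- test the inequality at `t = b ± 1`, `t = 0` and `t = 2b`
    have hstep : ∀ e, ρ * (|b + e| - |b|) ≤ ρ * |e| := fun e =>
      mul_le_mul_of_nonneg_left (by simpa using abs_sub_abs_le_abs_sub (b + e) b) hρ
    have hup := h (b + 1)
    have hdown := h (b + -1)
    have h0 := h 0
    have h2 := h (2 * b)
    rw [abs_zero] at h0
    rw [abs_mul, abs_two] at h2
    refine ⟨abs_le.2 ⟨?_, ?_⟩, ?_⟩ <;>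
      nlinarith [hstep 1, hstep (-1), abs_one (α := ℝ), abs_neg (1 : ℝ)]
  · rintro ⟨hD, hopt⟩ t
    nlinarith [neg_abs_le (D * t), abs_mul D t, mul_le_mul_of_nonneg_right hD (abs_nonneg t)]

open Filter Topology in
theorem nonneg_of_forall_mul_add_nonneg {q L : ℝ}
    (h : ∀ ε ∈ Set.Ioc (0 : ℝ) 1, 0 ≤ q * ε + L) : 0 ≤ L := by
  have hlim : Tendsto (fun ε => q * ε + L) (𝓝[>] 0) (𝓝 L) := by
    have : Continuous fun ε : ℝ => q * ε + L := by fun_prop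
    simpa using (this.tendsto 0).mono_left nhdsWithin_le_nhds
  exact ge_of_tendsto hlim (eventually_of_mem (Ioc_mem_nhdsGT one_pos) h)

theorem forall_linear_abs_nonneg_of_forall_sq_add {q D ρ b : ℝ} (hρ : 0 ≤ ρ)
    (h : ∀ t, 0 ≤ q * (t - b) ^ 2 + (D * (t - b) + ρ * (|t| - |b|))) (t : ℝ) :
    0 ≤ D * (t - b) + ρ * (|t| - |b|) := by
  refine nonneg_of_forall_mul_add_nonneg (q := q * (t - b) ^ 2) fun ε ⟨hε0, hε1⟩ => ?_
  have hconv : |b + ε * (t - b)| ≤ (1 - ε) * |b| + ε * |t| := by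
    calc |b + ε * (t - b)| = |(1 - ε) * b + ε * t| := by ring_nf
      _ ≤ |(1 - ε) * b| + |ε * t| := abs_add_le _ _
      _ = (1 - ε) * |b| + ε * |t| := by
        rw [abs_mul, abs_mul, abs_of_nonneg (by linarith), abs_of_pos hε0]
  have hε := h (b + ε * (t - b))
  refine nonneg_of_mul_nonneg_right ?_ hε0
  nlinarith [mul_le_mul_of_nonneg_left hconv hρ]

section Objective

variable {ι : Type*} [Fintype ι]

noncomputable def lassoObjective (Q : Matrix ι ι ℝ) (s ρ β : ι → ℝ) : ℝ :=
  (1/4) * (β ⬝ᵥ Q *ᵥ β) - s ⬝ᵥ β + ∑ j, ρ j * |β j|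

theorem lassoObjective_sub {Q : Matrix ι ι ℝ} (hQ : Q.IsSymm) (s ρ β β' : ι → ℝ) :
    lassoObjective Q s ρ β' - lassoObjective Q s ρ β
      = (1/4) * ((β' - β) ⬝ᵥ Q *ᵥ (β' - β))
        + ∑ j, ((1/2 * (Q *ᵥ β) j - s j) * (β' j - β j) + ρ j * (|β' j| - |β j|)) := by
  obtain ⟨d, rfl⟩ : ∃ d, β' = β + d := ⟨β' - β, by abel⟩
  have hsymm : β ⬝ᵥ Q *ᵥ d = d ⬝ᵥ Q *ᵥ β := by
    rw [dotProduct_mulVec, ← mulVec_transpose, hQ.eq, dotProduct_comm]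
  have hlin : ∑ j, (1/2 * (Q *ᵥ β) j - s j) * d j = 1/2 * (Q *ᵥ β ⬝ᵥ d) - s ⬝ᵥ d := by
    simp only [dotProduct, sub_mul, Finset.sum_sub_distrib, Finset.mul_sum, mul_assoc]
  have habs : ∑ j, ρ j * (|β j + d j| - |β j|) = ∑ j, ρ j * |β j + d j| - ∑ j, ρ j * |β j| := by
    simp only [mul_sub, Finset.sum_sub_distrib]
  simp only [lassoObjective, add_sub_cancel_left, Pi.add_apply, Finset.sum_add_distrib, hlin, habs,
    mulVec_add, dotProduct_add, add_dotProduct, hsymm]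
  rw [dotProduct_comm (Q *ᵥ β) d]
  ring

theorem lassoObjective_update_sub [DecidableEq ι] {Q : Matrix ι ι ℝ} (hQ : Q.IsSymm)
    (s ρ β : ι → ℝ) (j : ι) (t : ℝ) :
    lassoObjective Q s ρ (Function.update β j t) - lassoObjective Q s ρ β
      = Q j j / 4 * (t - β j) ^ 2
        + ((1/2 * (Q *ᵥ β) j - s j) * (t - β j) + ρ j * (|t| - |β j|)) := by
  have hd : Function.update β j t - β = Pi.single j (t - β j) := by
    calc Function.update β j t - β = Function.update β j t - Function.update β j (β j) := by
          rw [Function.update_eq_self]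
      _ = Pi.single j (t - β j) := by rw [← Function.update_sub, sub_self]; rfl
  have hquad : Pi.single j (t - β j) ⬝ᵥ Q *ᵥ Pi.single j (t - β j) = Q j j * (t - β j) ^ 2 := by
    rw [single_dotProduct, mulVec, dotProduct_single]
    ring
  rw [lassoObjective_sub hQ, hd, hquad, Finset.sum_eq_single j, Function.update_self]
  · ring
  · intro k _ hk
    simp [Function.update_of_ne hk]
  · simp

end Objective

/-- Coordinatewise characterization of the weighted-Lasso minimizer: `β` minimizes
`F(β) = (1/4) βᵀ Σ11 β - s12ᵀ β + ∑ⱼ (p12)ⱼ |βⱼ|` iff each coordinate satisfies the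
soft-thresholding fixed-point equation. -/
theorem lasso_coordinatewise_characterization {m : ℕ}
    (Sig11 : Matrix (Fin m) (Fin m) ℝ) (hSig11 : Sig11.PosDef)
    (s12 p12 : Fin m → ℝ) (hp12 : ∀ j, 0 ≤ p12 j)
    (β : Fin m → ℝ) :
    (∀ β' : Fin m → ℝ,
      (1/4) * (β ⬝ᵥ Sig11.mulVec β) - s12 ⬝ᵥ β + ∑ j, p12 j * |β j|
        ≤ (1/4) * (β' ⬝ᵥ Sig11.mulVec β') - s12 ⬝ᵥ β' + ∑ j, p12 j * |β' j|)
    ↔ ∀ j, β j = 2 * softThreshold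
        (s12 j - (1/2) * ∑ k ∈ Finset.univ.erase j, Sig11 j k * β k) (p12 j)
        / Sig11 j j := by
  have hsymm : Sig11.IsSymm := isHermitian_iff_isSymm.1 hSig11.isHermitian
  have hfix : ∀ j, β j = 2 * softThreshold
      (s12 j - (1/2) * ∑ k ∈ Finset.univ.erase j, Sig11 j k * β k) (p12 j) / Sig11 j j ↔
      |1/2 * (Sig11 *ᵥ β) j - s12 j| ≤ p12 j ∧
        (1/2 * (Sig11 *ᵥ β) j - s12 j) * β j + p12 j * |β j| = 0 := fun j => by
    have hD : Sig11 j j / 2 * β j - (s12 j - (1/2) * ∑ k ∈ Finset.univ.erase j, Sig11 j k * β k)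
        = 1/2 * (Sig11 *ᵥ β) j - s12 j := by
      rw [mulVec, dotProduct, ← Finset.add_sum_erase _ _ (Finset.mem_univ j)]
      ring
    rw [eq_two_mul_softThreshold_div_iff hSig11.diag_pos (hp12 j), hD]
  change (∀ β', lassoObjective Sig11 s12 p12 β ≤ lassoObjective Sig11 s12 p12 β') ↔ _
  simp only [hfix]
  constructor
  · intro hmin j
    refine (forall_linear_abs_nonneg_iff (hp12 j)).1
      (forall_linear_abs_nonneg_of_forall_sq_add (q := Sig11 j j / 4) (hp12 j) fun t => ?_)
    rw [← lassoObjective_update_sub hsymm]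
    exact sub_nonneg.2 (hmin _)
  · intro hcond β'
    rw [← sub_nonneg, lassoObjective_sub hsymm]
    refine add_nonneg (mul_nonneg (by norm_num) ?_)
      (Finset.sum_nonneg fun j _ => (forall_linear_abs_nonneg_iff (hp12 j)).2 (hcond j) (β' j))
    simpa using hSig11.posSemidef.dotProduct_mulVec_nonneg (β' - β)
end

section
/- Let g : Θ_ε → R^{pQ} be the fixed-point map of the variational E-step for the affiliation model with two penalty values, and suppose the quantities L_{ij} = |K_{ij}|/λ + log(2λ) satisfy 0 < L_{ij} < ε/(2(p-1)(1+ε)) for both λ ∈ {λ_in, λ_out} and all i ≠ j. Then d(g(a), g(b)) ≤ c · d(a, b) for all a, b ∈ Θ_ε, with contraction constant c = (1 + ε⁻¹)·2(p-1)·max_{i≠j} L_{ij}^max < 1, where d(a,b) = max_i max_{q,ℓ} log(a_{iq} b_{iℓ} / (b_{iq} a_{iℓ})). -/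
/-!
In each row the log cross-ratio of the E-step map is linear in its argument: the normalising
constants and the weights `α` cancel, and since `∑_ℓ a_{jℓ} (if q = ℓ then L^in else L^out)`
equals `(L^in - L^out) a_{jq} + L^out`, one gets
`log (g(a)_{iq} g(b)_{iℓ} / (g(b)_{iq} g(a)_{iℓ}))
  = ∑_{j≠i} (L^in_{ij} - L^out_{ij}) ((b_{jq} - a_{jq}) - (b_{jℓ} - a_{jℓ}))`.
As `L^in, L^out ∈ (0, M]`, the first factor is at most `M`. For the second, entries of two rows
with the same sum and entries in `(0, 1]` satisfy `|a_q - b_q| ≤ d(a, b)`: if `a_q > b_q`, some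
`a_ℓ ≤ b_ℓ`, and `a_q - b_q ≤ 1 - b_q / a_q ≤ log (a_q / b_q) ≤ log (a_q b_ℓ / (b_q a_ℓ))`.
Hence `d(g(a), g(b)) ≤ 2 (p - 1) M d(a, b)`, and `1 ≤ 1 + ε⁻¹`.
-/

/-- The row-wise Hilbert-type distance
`d(a,b) = max_i max_{q,ℓ} log (a_{iq} b_{iℓ} / (b_{iq} a_{iℓ}))`. -/
noncomputable def dHilbert {p Q : ℕ} (a b : Fin p → Fin Q → ℝ) : ℝ :=
  ⨆ i, ⨆ q, ⨆ l, Real.log (a i q * b i l / (b i q * a i l))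

/-- The set `Θ_ε` of `p × Q` row-stochastic matrices with all entries in `[ε, 1-ε]`. -/
def ThetaEps (p Q : ℕ) (ε : ℝ) : Set (Fin p → Fin Q → ℝ) :=
  {a | (∀ i q, a i q ∈ Set.Icc ε (1 - ε)) ∧ ∀ i, ∑ q, a i q = 1}

/-- Penalty value `L = |K i j| / λ + log (2λ)` of the affiliation model. -/
noncomputable def Lval {p : ℕ} (K : Matrix (Fin p) (Fin p) ℝ) (lam : ℝ) (i j : Fin p) : ℝ :=
  |K i j| / lam + Real.log (2 * lam)

/-- Unnormalized variational E-step quantity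
`u_{iq}(a) = α_q exp (-∑_{j≠i} ∑_ℓ a_{jℓ} L_{ijqℓ})` for the affiliation model, where
`L_{ijqℓ} = L^in_{ij}` if `q = ℓ` and `L^out_{ij}` otherwise. -/
noncomputable def uE {p Q : ℕ} (K : Matrix (Fin p) (Fin p) ℝ) (α : Fin Q → ℝ)
    (lamIn lamOut : ℝ) (a : Fin p → Fin Q → ℝ) (i : Fin p) (q : Fin Q) : ℝ :=
  α q * Real.exp (-(∑ j ∈ Finset.univ.erase i, ∑ l,
    a j l * (if q = l then Lval K lamIn i j else Lval K lamOut i j)))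

/-- The fixed-point map `g_{iq}(a) = u_{iq}(a) / ∑_ℓ u_{iℓ}(a)` of the variational
E-step for the affiliation model. -/
noncomputable def gE {p Q : ℕ} (K : Matrix (Fin p) (Fin p) ℝ) (α : Fin Q → ℝ)
    (lamIn lamOut : ℝ) (a : Fin p → Fin Q → ℝ) (i : Fin p) (q : Fin Q) : ℝ :=
  uE K α lamIn lamOut a i q / ∑ l, uE K α lamIn lamOut a i l

open Finset Real

lemma log_mul_div_mul_comm_self (x y : ℝ) : log (x * y / (y * x)) = 0 := by
  rcases eq_or_ne (x * y) 0 with h | h <;> simp [mul_comm y x, h]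

lemma log_le_dHilbert {p Q : ℕ} (a b : Fin p → Fin Q → ℝ) (i : Fin p) (q l : Fin Q) :
    log (a i q * b i l / (b i q * a i l)) ≤ dHilbert a b :=
  le_ciSup_of_le (Set.finite_range _).bddAbove i <|
    le_ciSup_of_le (Set.finite_range _).bddAbove q <|
      le_ciSup (f := fun l => log (a i q * b i l / (b i q * a i l))) (Set.finite_range _).bddAbove l

lemma dHilbert_nonneg {p Q : ℕ} (a b : Fin p → Fin Q → ℝ) : 0 ≤ dHilbert a b :=
  Real.iSup_nonneg fun _ => Real.iSup_nonneg fun q =>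
    le_ciSup_of_le (Set.finite_range _).bddAbove q (log_mul_div_mul_comm_self _ _).ge

lemma dHilbert_le {p Q : ℕ} {a b : Fin p → Fin Q → ℝ} {c : ℝ} (hc : 0 ≤ c)
    (h : ∀ i q l, log (a i q * b i l / (b i q * a i l)) ≤ c) : dHilbert a b ≤ c :=
  Real.iSup_le (fun i => Real.iSup_le (fun q => Real.iSup_le (h i q) hc) hc) hc

lemma exists_sub_le_log_cross_ratio {ι : Type*} [Fintype ι] {a b : ι → ℝ}
    (ha : ∀ q, 0 < a q) (ha₁ : ∀ q, a q ≤ 1) (hb : ∀ q, 0 < b q)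
    (hsum : ∑ q, a q = ∑ q, b q) (q : ι) :
    ∃ l, a q - b q ≤ log (a q * b l / (b q * a l)) := by
  rcases le_or_gt (a q) (b q) with hle | hlt
  · exact ⟨q, by rw [log_mul_div_mul_comm_self]; linarith⟩
  obtain ⟨l, -, hl⟩ := exists_le_of_sum_le ⟨q, mem_univ q⟩ hsum.le
  have haq := ha q
  have hbq := hb q
  have hal := ha l
  refine ⟨l, ?_⟩
  calc a q - b q ≤ 1 - (a q / b q)⁻¹ := by
        rw [inv_div, one_sub_div haq.ne']
        exact (le_div_iff₀ haq).2 (by nlinarith [ha₁ q])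
    _ ≤ log (a q / b q) := one_sub_inv_le_log_of_pos (by positivity)
    _ ≤ log (a q * b l / (b q * a l)) := by
        refine log_le_log (by positivity) ?_
        rw [mul_div_mul_comm]
        exact le_mul_of_one_le_right (by positivity) ((one_le_div hal).2 hl)

lemma abs_sub_le_of_log_cross_ratio_le {ι : Type*} [Fintype ι] {a b : ι → ℝ}
    (ha : ∀ q, 0 < a q) (ha₁ : ∀ q, a q ≤ 1) (hb : ∀ q, 0 < b q) (hb₁ : ∀ q, b q ≤ 1)
    (hsum : ∑ q, a q = ∑ q, b q) {d : ℝ} (hd : ∀ q l, log (a q * b l / (b q * a l)) ≤ d)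
    (q : ι) : |a q - b q| ≤ d := by
  obtain ⟨l, hl⟩ := exists_sub_le_log_cross_ratio ha ha₁ hb hsum q
  obtain ⟨l', hl'⟩ := exists_sub_le_log_cross_ratio hb hb₁ ha hsum.symm q
  have hd' := hd l' q
  rw [show a l' * b q / (b l' * a q) = b q * a l' / (a q * b l') by ring] at hd'
  exact abs_sub_le_iff.2 ⟨hl.trans (hd q l), hl'.trans hd'⟩

namespace ThetaEps

variable {p Q : ℕ} {ε : ℝ} {a b : Fin p → Fin Q → ℝ}

lemma pos (hε : 0 < ε) (ha : a ∈ ThetaEps p Q ε) (i : Fin p) (q : Fin Q) : 0 < a i q :=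
  hε.trans_le (ha.1 i q).1

lemma le_one (hε : 0 < ε) (ha : a ∈ ThetaEps p Q ε) (i : Fin p) (q : Fin Q) : a i q ≤ 1 :=
  (ha.1 i q).2.trans (by linarith)

lemma abs_sub_le_dHilbert (hε : 0 < ε) (ha : a ∈ ThetaEps p Q ε) (hb : b ∈ ThetaEps p Q ε)
    (i : Fin p) (q : Fin Q) : |a i q - b i q| ≤ dHilbert a b :=
  abs_sub_le_of_log_cross_ratio_le (pos hε ha i) (le_one hε ha i) (pos hε hb i)
    (le_one hε hb i) (by rw [ha.2 i, hb.2 i]) (log_le_dHilbert a b i) q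

end ThetaEps

noncomputable def weightedSoftmax {ι : Type*} [Fintype ι] (α A : ι → ℝ) (q : ι) : ℝ :=
  α q * exp (-A q) / ∑ m, α m * exp (-A m)

lemma log_cross_ratio_weightedSoftmax {ι : Type*} [Fintype ι] {α : ι → ℝ}
    (hα : ∀ q, 0 < α q) (A B : ι → ℝ) (q l : ι) :
    log (weightedSoftmax α A q * weightedSoftmax α B l /
        (weightedSoftmax α B q * weightedSoftmax α A l)) = (B q - A q) - (B l - A l) := by
  have hZ : ∀ C : ι → ℝ, 0 < ∑ m, α m * exp (-C m) := fun C =>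
    sum_pos (fun m _ => mul_pos (hα m) (exp_pos _)) ⟨q, mem_univ q⟩
  have hq := hα q
  have hl := hα l
  have hA := hZ A
  have hB := hZ B
  rw [← log_exp ((B q - A q) - (B l - A l))]
  congr 1
  unfold weightedSoftmax
  generalize ∑ m, α m * exp (-A m) = ZA at hA ⊢
  generalize ∑ m, α m * exp (-B m) = ZB at hB ⊢
  simp only [exp_sub, exp_neg]
  field_simp

lemma sum_mul_ite_eq {ι R : Type*} [Fintype ι] [DecidableEq ι] [CommRing R] (x : ι → R)
    (q : ι) (c d : R) :
    ∑ m, x m * (if q = m then c else d) = (c - d) * x q + d * ∑ m, x m := by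
  have h : ∀ m, x m * (if q = m then c else d) = (if q = m then (c - d) * x m else 0) + d * x m :=
    fun m => by split_ifs <;> ring
  simp only [h, sum_add_distrib, sum_ite_eq, mem_univ, if_true, mul_sum]

lemma gE_eq_weightedSoftmax {p Q : ℕ} (K : Matrix (Fin p) (Fin p) ℝ) (α : Fin Q → ℝ)
    (lamIn lamOut : ℝ) (x : Fin p → Fin Q → ℝ) (i : Fin p) :
    gE K α lamIn lamOut x i = weightedSoftmax α fun q => ∑ j ∈ univ.erase i, ∑ m,
      x j m * (if q = m then Lval K lamIn i j else Lval K lamOut i j) :=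
  rfl

lemma log_cross_ratio_gE {p Q : ℕ} (K : Matrix (Fin p) (Fin p) ℝ) {α : Fin Q → ℝ}
    (hα : ∀ q, 0 < α q) (lamIn lamOut : ℝ) (a b : Fin p → Fin Q → ℝ) (i : Fin p) (q l : Fin Q) :
    log (gE K α lamIn lamOut a i q * gE K α lamIn lamOut b i l /
        (gE K α lamIn lamOut b i q * gE K α lamIn lamOut a i l)) =
      ∑ j ∈ univ.erase i, (Lval K lamIn i j - Lval K lamOut i j) *
        ((b j q - a j q) - (b j l - a j l)) := by
  rw [gE_eq_weightedSoftmax, gE_eq_weightedSoftmax, log_cross_ratio_weightedSoftmax hα]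
  simp only [sum_mul_ite_eq, ← sum_sub_distrib]
  exact sum_congr rfl fun j _ => by ring

lemma dHilbert_gE_le {p Q : ℕ} (hp : 1 ≤ p) {ε : ℝ} (hε : 0 < ε)
    (K : Matrix (Fin p) (Fin p) ℝ) {α : Fin Q → ℝ} (hα : ∀ q, 0 < α q) (lamIn lamOut : ℝ)
    {M : ℝ} (hM₀ : 0 ≤ M) (hM : ∀ i j, i ≠ j → |Lval K lamIn i j - Lval K lamOut i j| ≤ M)
    {a b : Fin p → Fin Q → ℝ} (ha : a ∈ ThetaEps p Q ε) (hb : b ∈ ThetaEps p Q ε) :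
    dHilbert (gE K α lamIn lamOut a) (gE K α lamIn lamOut b)
      ≤ 2 * ((p : ℝ) - 1) * M * dHilbert a b := by
  have hp' : (0 : ℝ) ≤ p - 1 := sub_nonneg.2 (by exact_mod_cast hp)
  refine dHilbert_le (mul_nonneg (mul_nonneg (by positivity) hM₀) (dHilbert_nonneg a b))
    fun i q l => ?_
  have hrow : ∀ j, |(b j q - a j q) - (b j l - a j l)| ≤ 2 * dHilbert a b := fun j => by
    have hq := ThetaEps.abs_sub_le_dHilbert hε ha hb j q
    have hl := ThetaEps.abs_sub_le_dHilbert hε ha hb j l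
    rw [abs_sub_comm] at hq hl
    linarith [abs_sub (b j q - a j q) (b j l - a j l)]
  rw [log_cross_ratio_gE K hα]
  calc _ ≤ ∑ j ∈ univ.erase i, M * (2 * dHilbert a b) := by
        refine (le_abs_self _).trans ((abs_sum_le_sum_abs _ _).trans (sum_le_sum fun j hj => ?_))
        rw [abs_mul]
        exact mul_le_mul (hM i j (ne_of_mem_erase hj).symm) (hrow j) (abs_nonneg _) hM₀
    _ = _ := by
        rw [sum_const, card_erase_of_mem (mem_univ i), card_univ, Fintype.card_fin,
          nsmul_eq_mul, Nat.cast_sub hp, Nat.cast_one]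
        ring

lemma one_add_inv_mul_mul_lt_one {ε n M : ℝ} (hε : 0 < ε) (hn : 0 < n)
    (hM : M < ε / (n * (1 + ε))) : (1 + ε⁻¹) * n * M < 1 := by
  calc (1 + ε⁻¹) * n * M < (1 + ε⁻¹) * n * (ε / (n * (1 + ε))) := by gcongr
    _ = 1 := by field_simp; ring

theorem variational_fixed_point_contraction_general {p Q : ℕ} (hp : 2 ≤ p)
    (ε : ℝ) (hε : 0 < ε)
    (K : Matrix (Fin p) (Fin p) ℝ)
    (α : Fin Q → ℝ) (hα : ∀ q, 0 < α q)
    (lamIn lamOut : ℝ)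
    (hbound : ∀ i j, i ≠ j →
      (0 < Lval K lamIn i j ∧ Lval K lamIn i j < ε / (2 * ((p : ℝ) - 1) * (1 + ε))) ∧
      (0 < Lval K lamOut i j ∧ Lval K lamOut i j < ε / (2 * ((p : ℝ) - 1) * (1 + ε))))
    (M : ℝ)
    (hM : IsGreatest {x : ℝ | ∃ i j, i ≠ j ∧ x = max (Lval K lamIn i j) (Lval K lamOut i j)} M) :
    (1 + ε⁻¹) * (2 * ((p : ℝ) - 1)) * M < 1 ∧
    ∀ a ∈ ThetaEps p Q ε, ∀ b ∈ ThetaEps p Q ε,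
      dHilbert (gE K α lamIn lamOut a) (gE K α lamIn lamOut b)
        ≤ (1 + ε⁻¹) * (2 * ((p : ℝ) - 1)) * M * dHilbert a b := by
  obtain ⟨⟨i₀, j₀, hij₀, hM_eq⟩, hM_ub⟩ := hM
  have hM_pos : 0 < M := hM_eq ▸ lt_max_of_lt_left (hbound i₀ j₀ hij₀).1.1
  have hM_lt : M < ε / (2 * ((p : ℝ) - 1) * (1 + ε)) :=
    hM_eq ▸ max_lt (hbound i₀ j₀ hij₀).1.2 (hbound i₀ j₀ hij₀).2.2
  have hD : ∀ i j, i ≠ j → |Lval K lamIn i j - Lval K lamOut i j| ≤ M := fun i j hij =>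
    abs_sub_le_of_nonneg_of_le (hbound i j hij).1.1.le
      ((le_max_left _ _).trans (hM_ub ⟨i, j, hij, rfl⟩)) (hbound i j hij).2.1.le
      ((le_max_right _ _).trans (hM_ub ⟨i, j, hij, rfl⟩))
  have hp' : (0 : ℝ) < 2 * ((p : ℝ) - 1) := by
    have : (2 : ℝ) ≤ p := by exact_mod_cast hp
    linarith
  refine ⟨one_add_inv_mul_mul_lt_one hε hp' hM_lt, fun a ha b hb => ?_⟩
  calc _ ≤ 2 * ((p : ℝ) - 1) * M * dHilbert a b :=
        dHilbert_gE_le (by omega) hε K hα lamIn lamOut hM_pos.le hD ha hb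
    _ ≤ (1 + ε⁻¹) * (2 * ((p : ℝ) - 1) * M * dHilbert a b) :=
        le_mul_of_one_le_left (by positivity [dHilbert_nonneg a b])
          (le_add_of_nonneg_right (by positivity))
    _ = _ := by ring

/-- Contraction property of the variational E-step fixed-point map for the affiliation
model: if `0 < L_{ij} < ε / (2(p-1)(1+ε))` for both `λ ∈ {λ_in, λ_out}` and all `i ≠ j`,
then `d(g(a), g(b)) ≤ c · d(a, b)` on `Θ_ε`, with contraction constant
`c = (1 + ε⁻¹) · 2(p-1) · max_{i≠j} L^max_{ij} < 1`. -/
theorem variational_fixed_point_contraction {p Q : ℕ} (hp : 2 ≤ p) (hQ : 0 < Q)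
    (ε : ℝ) (hε : 0 < ε) (hε' : ε < 1 / 2)
    (K : Matrix (Fin p) (Fin p) ℝ)
    (α : Fin Q → ℝ) (hα : ∀ q, 0 < α q)
    (lamIn lamOut : ℝ) (hlamIn : 0 < lamIn) (hlamOut : 0 < lamOut)
    (hbound : ∀ i j, i ≠ j →
      (0 < Lval K lamIn i j ∧ Lval K lamIn i j < ε / (2 * ((p : ℝ) - 1) * (1 + ε))) ∧
      (0 < Lval K lamOut i j ∧ Lval K lamOut i j < ε / (2 * ((p : ℝ) - 1) * (1 + ε))))
    (M : ℝ)
    (hM : IsGreatest {x : ℝ | ∃ i j, i ≠ j ∧ x = max (Lval K lamIn i j) (Lval K lamOut i j)} M) :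
    (1 + ε⁻¹) * (2 * ((p : ℝ) - 1)) * M < 1 ∧
    ∀ a ∈ ThetaEps p Q ε, ∀ b ∈ ThetaEps p Q ε,
      dHilbert (gE K α lamIn lamOut a) (gE K α lamIn lamOut b)
        ≤ (1 + ε⁻¹) * (2 * ((p : ℝ) - 1)) * M * dHilbert a b :=
  variational_fixed_point_contraction_general hp ε hε K α hα lamIn lamOut hbound M hM
end

section
/- Let X ~ N(0, Σ) with Σ positive definite, K = Σ⁻¹. Then the pseudo log-likelihood Σ_i Σ_k log p(X_i^k | X_{\i}^k) for an n-sample equals (n/2) Σ_i (log K_{ii} - K_{ii} S_{ii} - 2 S_{i\i} K_{i\i} - (1/K_{ii}) K_{i\i} S_{\i\i} K_{i\i}ᵀ) + c, where c does not depend on K, S is the empirical covariance matrix, and for each i, K_{i\i} (resp. S_{i\i}) denotes the i-th row of K (resp. S) with the i-th entry removed and S_{\i\i} the matrix S with i-th row and column removed. -/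
/-!
The conditional law of `Xᵢ` given the other coordinates is read off the precision matrix
`K = Σ⁻¹`: the `i`-th column of `Σ K = 1` gives `Σ_{\i\i}⁻¹ Σ_{\i i} = -K_{\i i} / Kᵢᵢ`, so the
conditional variance is `1 / Kᵢᵢ` and the residual `Xᵢ - E[Xᵢ | X_{\i}]` is `(K X)ᵢ / Kᵢᵢ`.
Each conditional log-density is therefore `(log Kᵢᵢ - log 2π) / 2 - (K X)ᵢ² / (2 Kᵢᵢ)`; summing
over the sample turns `∑ₖ (K X^k)ᵢ²` into `n Kᵢ S Kᵢᵀ`, and splitting this quadratic form along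
the coordinate `i` gives the three `S`-terms of the formula.
-/

open Matrix Real

theorem Real.log_inv_sqrt_mul_exp_neg_sq {v : ℝ} (hv : 0 < v) (r : ℝ) :
    log ((√(2 * π * v))⁻¹ * exp (-r ^ 2 / (2 * v))) =
      -(log (2 * π) + log v) / 2 - r ^ 2 / (2 * v) := by
  rw [log_mul (by positivity) (exp_ne_zero _), log_exp, log_inv, log_sqrt (by positivity),
    log_mul (by positivity) hv.ne']
  ring

namespace Matrix

section Precision

variable {ι 𝕜 : Type*} [Fintype ι] [DecidableEq ι] [Field 𝕜] {M K : Matrix ι ι 𝕜} {i : ι}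

/-- For a covariance matrix `M`, `gaussianCondMean M i y = M_{i\i} M_{\i\i}⁻¹ y` and
`gaussianCondVar M i` are the mean and the variance of the conditional law of `Xᵢ` given
`X_{\i} = y`. -/
noncomputable def gaussianCondMean (M : Matrix ι ι 𝕜) (i : ι) (y : {j // j ≠ i} → 𝕜) : 𝕜 :=
  (fun j : {j // j ≠ i} => M i j) ⬝ᵥ (M.submatrix Subtype.val Subtype.val)⁻¹ *ᵥ y

noncomputable def gaussianCondVar (M : Matrix ι ι 𝕜) (i : ι) : 𝕜 :=
  M i i - gaussianCondMean M i fun j => M j i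

theorem submatrix_ne_mulVec_of_mul_eq_one (hMK : M * K = 1) (hi : K i i ≠ 0) :
    M.submatrix Subtype.val Subtype.val *ᵥ (fun j : {j // j ≠ i} => -K j i / K i i) =
      fun j : {j // j ≠ i} => M j i := by
  funext j
  have hji : ∑ m, M j m * K m i = 0 := by rw [← mul_apply, hMK, one_apply_ne j.2]
  rw [Fintype.sum_eq_add_sum_subtype_ne _ i] at hji
  simp only [mulVec, dotProduct, submatrix_apply, mul_div_assoc', mul_neg, neg_div,
    Finset.sum_neg_distrib, ← Finset.sum_div]
  field_simp
  linear_combination -hji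

theorem inv_submatrix_ne_mulVec_col (hMK : M * K = 1) (hi : K i i ≠ 0)
    (hA : IsUnit (M.submatrix (Subtype.val : {j // j ≠ i} → ι) Subtype.val).det) :
    (M.submatrix Subtype.val Subtype.val)⁻¹ *ᵥ (fun j : {j // j ≠ i} => M j i) =
      fun j : {j // j ≠ i} => -K j i / K i i := by
  rw [← submatrix_ne_mulVec_of_mul_eq_one hMK hi, mulVec_mulVec, nonsing_inv_mul _ hA,
    one_mulVec]

theorem row_vecMul_inv_submatrix_ne (hKM : K * M = 1) (hi : K i i ≠ 0)
    (hA : IsUnit (M.submatrix (Subtype.val : {j // j ≠ i} → ι) Subtype.val).det) :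
    (fun j : {j // j ≠ i} => M i j) ᵥ* (M.submatrix Subtype.val Subtype.val)⁻¹ =
      fun j : {j // j ≠ i} => -K i j / K i i := by
  have hMKt : Mᵀ * Kᵀ = 1 := by rw [← transpose_mul, hKM, transpose_one]
  have hAt : IsUnit (Mᵀ.submatrix (Subtype.val : {j // j ≠ i} → ι) Subtype.val).det := by
    rwa [← transpose_submatrix, det_transpose]
  have := inv_submatrix_ne_mulVec_col hMKt hi hAt
  rwa [← transpose_submatrix, ← transpose_nonsing_inv, mulVec_transpose] at this

theorem gaussianCondVar_eq_one_div (hMK : M * K = 1) (hi : K i i ≠ 0)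
    (hA : IsUnit (M.submatrix (Subtype.val : {j // j ≠ i} → ι) Subtype.val).det) :
    gaussianCondVar M i = 1 / K i i := by
  have hii : ∑ m, M i m * K m i = 1 := by rw [← mul_apply, hMK, one_apply_eq]
  rw [Fintype.sum_eq_add_sum_subtype_ne _ i] at hii
  rw [gaussianCondVar, gaussianCondMean, inv_submatrix_ne_mulVec_col hMK hi hA]
  simp only [dotProduct, mul_div_assoc', mul_neg, neg_div, Finset.sum_neg_distrib,
    ← Finset.sum_div]
  field_simp
  linear_combination hii

theorem sub_gaussianCondMean_eq (hKM : K * M = 1) (hi : K i i ≠ 0)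
    (hA : IsUnit (M.submatrix (Subtype.val : {j // j ≠ i} → ι) Subtype.val).det)
    (x : ι → 𝕜) :
    x i - gaussianCondMean M i (fun j => x j) = K i ⬝ᵥ x / K i i := by
  rw [gaussianCondMean, dotProduct_mulVec, row_vecMul_inv_submatrix_ne hKM hi hA, dotProduct,
    dotProduct, Fintype.sum_eq_add_sum_subtype_ne _ i]
  simp only [div_mul_eq_mul_div, neg_mul, neg_div, Finset.sum_neg_distrib, ← Finset.sum_div]
  field_simp
  ring

end Precision

section Quadratic

variable {ι R : Type*} [Fintype ι] [CommRing R]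

theorem sum_dotProduct_sq_eq_dotProduct_transpose_mul_self_mulVec {m : Type*} [Fintype m]
    (X : Matrix m ι R) (v : ι → R) :
    ∑ k, (v ⬝ᵥ X k) ^ 2 = v ⬝ᵥ (Xᵀ * X) *ᵥ v := by
  rw [← mulVec_mulVec, dotProduct_mulVec, vecMul_transpose, dotProduct]
  simp only [sq, mulVec, dotProduct_comm]

theorem IsSymm.dotProduct_mulVec_eq_add_sum_ne [DecidableEq ι] {S : Matrix ι ι R}
    (hS : S.IsSymm) (v : ι → R) (i : ι) :
    v ⬝ᵥ S *ᵥ v = v i * S i i * v i + 2 * v i * ∑ j : {j // j ≠ i}, S i j * v j +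
      ∑ j : {j // j ≠ i}, ∑ l : {l // l ≠ i}, v j * S j l * v l := by
  simp only [dotProduct, mulVec, Fintype.sum_eq_add_sum_subtype_ne _ i, mul_add,
    Finset.sum_add_distrib, Finset.mul_sum, mul_assoc]
  have hcross : ∑ j : {j // j ≠ i}, v i * (S i j * v j) +
      ∑ j : {j // j ≠ i}, v j * (S j i * v i) = ∑ j : {j // j ≠ i}, 2 * (v i * (S i j * v j)) := by
    rw [← Finset.sum_add_distrib]
    exact Finset.sum_congr rfl fun j _ => by rw [hS.apply]; ring
  linear_combination hcross

end Quadratic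

end Matrix

section EmpiricalCov

variable {ι : Type*} {n : ℕ}

noncomputable def empiricalCov (X : Fin n → ι → ℝ) : Matrix ι ι ℝ :=
  of fun a b => 1 / (n : ℝ) * ∑ k, X k a * X k b

theorem isSymm_empiricalCov (X : Fin n → ι → ℝ) : (empiricalCov X).IsSymm :=
  IsSymm.ext fun a b => by simp only [empiricalCov, of_apply, mul_comm]

theorem sum_dotProduct_sq_eq_mul_empiricalCov [Fintype ι] (hn : n ≠ 0) (X : Fin n → ι → ℝ)
    (v : ι → ℝ) :
    ∑ k, (v ⬝ᵥ X k) ^ 2 = n * (v ⬝ᵥ empiricalCov X *ᵥ v) := by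
  have hXX : (of X)ᵀ * of X = (n : ℝ) • empiricalCov X := by
    ext a b
    rw [Matrix.smul_apply, empiricalCov, of_apply, smul_eq_mul, one_div,
      mul_inv_cancel_left₀ (Nat.cast_ne_zero.mpr hn)]
    simp only [mul_apply, transpose_apply, of_apply]
  rw [← smul_eq_mul, ← dotProduct_smul, ← smul_mulVec, ← hXX]
  exact sum_dotProduct_sq_eq_dotProduct_transpose_mul_self_mulVec (of X) v

theorem sum_log_gaussian_regression_residual [Fintype ι] [DecidableEq ι] (hn : n ≠ 0)
    (X : Fin n → ι → ℝ) {a : ι → ℝ} {i : ι} (hai : 0 < a i) :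
    ∑ k, log ((√(2 * π * (1 / a i)))⁻¹ * exp (-(a ⬝ᵥ X k / a i) ^ 2 / (2 * (1 / a i)))) =
      n / 2 * (log (a i) - a i * empiricalCov X i i -
        2 * ∑ j : {j // j ≠ i}, empiricalCov X i j * a j -
        1 / a i * ∑ j : {j // j ≠ i}, ∑ l : {l // l ≠ i}, a j * empiricalCov X j l * a l) -
      n / 2 * log (2 * π) := by
  calc _ = ∑ k, ((log (a i) - log (2 * π)) / 2 - (a ⬝ᵥ X k) ^ 2 / (2 * a i)) := by
        refine Finset.sum_congr rfl fun k _ => ?_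
        rw [log_inv_sqrt_mul_exp_neg_sq (by positivity), one_div, log_inv]
        field_simp
        ring
    _ = n / 2 * (log (a i) - a ⬝ᵥ empiricalCov X *ᵥ a / a i) - n / 2 * log (2 * π) := by
        rw [Finset.sum_sub_distrib, Finset.sum_const, ← Finset.sum_div _ _ (2 * a i),
          sum_dotProduct_sq_eq_mul_empiricalCov hn]
        simp only [Finset.card_univ, Fintype.card_fin, nsmul_eq_mul]
        field_simp
        ring
    _ = _ := by
        rw [(isSymm_empiricalCov X).dotProduct_mulVec_eq_add_sum_ne a i]
        field_simp
        ring

end EmpiricalCov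

/-- The Gaussian pseudo log-likelihood `∑ᵢ ∑ₖ log p(Xᵢᵏ | X_{\i}ᵏ)` — where the
conditional distribution of `Xᵢ` given the other coordinates is `N(μᵢᵏ, σᵢ)` with
`μᵢᵏ = Σ_{i\i} Σ_{\i\i}⁻¹ X_{\i}ᵏ` and `σᵢ = Σᵢᵢ - Σ_{i\i} Σ_{\i\i}⁻¹ Σ_{i\i}ᵀ` —
equals `(n/2) ∑ᵢ (log Kᵢᵢ - Kᵢᵢ Sᵢᵢ - 2 S_{i\i} K_{i\i} - (1/Kᵢᵢ) K_{i\i} S_{\i\i} K_{i\i}ᵀ) + c`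
with `c = -(np/2) log (2π)` not depending on `K`. -/
theorem pseudo_loglikelihood_formula {p n : ℕ} (hn : 0 < n)
    (Sig : Matrix (Fin p) (Fin p) ℝ) (hSig : Sig.PosDef)
    (K : Matrix (Fin p) (Fin p) ℝ) (hK : K = Sig⁻¹)
    (X : Fin n → Fin p → ℝ)
    (S : Matrix (Fin p) (Fin p) ℝ)
    (hS : ∀ a b, S a b = (1 / (n : ℝ)) * ∑ k, X k a * X k b)
    (condVar : Fin p → ℝ)
    (hvar : ∀ i, condVar i =
      Sig i i -
        (fun j : {j : Fin p // j ≠ i} => Sig i (j : Fin p)) ⬝ᵥ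
          ((Sig.submatrix (fun j : {j : Fin p // j ≠ i} => (j : Fin p))
              (fun j : {j : Fin p // j ≠ i} => (j : Fin p)))⁻¹).mulVec
            (fun j : {j : Fin p // j ≠ i} => Sig (j : Fin p) i))
    (condMean : Fin p → Fin n → ℝ)
    (hmean : ∀ i k, condMean i k =
      (fun j : {j : Fin p // j ≠ i} => Sig i (j : Fin p)) ⬝ᵥ
        ((Sig.submatrix (fun j : {j : Fin p // j ≠ i} => (j : Fin p))
            (fun j : {j : Fin p // j ≠ i} => (j : Fin p)))⁻¹).mulVec
          (fun j : {j : Fin p // j ≠ i} => X k (j : Fin p))) :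
    ∑ i : Fin p, ∑ k : Fin n,
        Real.log ((Real.sqrt (2 * π * condVar i))⁻¹ *
          Real.exp (-(X k i - condMean i k) ^ 2 / (2 * condVar i)))
      = (n : ℝ) / 2 * ∑ i,
          (Real.log (K i i) - K i i * S i i
            - 2 * (∑ j : {j : Fin p // j ≠ i}, S i (j : Fin p) * K i (j : Fin p))
            - (1 / K i i) * ∑ j : {j : Fin p // j ≠ i}, ∑ l : {l : Fin p // l ≠ i},
                K i (j : Fin p) * S (j : Fin p) (l : Fin p) * K i (l : Fin p))
        + (-((n : ℝ) * p / 2) * Real.log (2 * π)) := by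
  obtain rfl : S = empiricalCov X := Matrix.ext hS
  have hdet : IsUnit Sig.det := hSig.det_pos.ne'.isUnit
  have hKii : ∀ i, 0 < K i i := fun i => hK ▸ hSig.inv.diag_pos
  have hA : ∀ i, IsUnit (Sig.submatrix (Subtype.val : {j // j ≠ i} → Fin p) Subtype.val).det :=
    fun i => (hSig.submatrix Subtype.val_injective).det_pos.ne'.isUnit
  have hcv : ∀ i, condVar i = 1 / K i i := fun i =>
    (hvar i).trans <| gaussianCondVar_eq_one_div (hK ▸ mul_nonsing_inv _ hdet) (hKii i).ne' (hA i)
  have hres : ∀ i k, X k i - condMean i k = K i ⬝ᵥ X k / K i i := fun i k => by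
    rw [hmean]
    exact sub_gaussianCondMean_eq (hK ▸ nonsing_inv_mul _ hdet) (hKii i).ne' (hA i) (X k)
  simp only [hcv, hres]
  rw [Finset.sum_congr rfl fun i _ => sum_log_gaussian_regression_residual hn.ne' X (hKii i),
    Finset.sum_sub_distrib, ← Finset.mul_sum]
  simp only [Finset.sum_const, Finset.card_univ, Fintype.card_fin, nsmul_eq_mul]
  ring
end
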